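/- Let X be chi-squared distributed with k degrees of freedom, i.e., X = Σᵢ₌₁ᵏ gᵢ² where gᵢ are i.i.d. N(0, σ²). Then for all t > 0, Pr[X − kσ² ≥ (2√(kt) + 2t)σ²] ≤ exp(−t). -/

import Mathlib

/-! Chernoff's method. For `c` with `2 c σ² < 1`, a Gaussian integral gives
`E exp (c g²) = (1 - 2 c σ²)^(-1/2)`, so by independence the tail is at most
`exp (-c ε - (k/2) log (1 - 2 c σ²))`. The logarithm is controlled by
`log x ≥ (x - x⁻¹) / 2` on `(0, 1]`, which is `sinh y ≤ y` for `y = log x ≤ 0`; with the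
optimal choice `1 - 2 c σ² = √k / (√k + 2√t)` the exponent collapses to exactly `-t`. -/

open MeasureTheory ProbabilityTheory Real
open scoped NNReal

lemma sub_inv_div_two_le_log {x : ℝ} (hx0 : 0 < x) (hx1 : x ≤ 1) : (x - x⁻¹) / 2 ≤ log x := by
  rw [← sinh_log hx0]
  exact sinh_le_self_iff.2 (log_nonpos hx0.le hx1)

lemma chi_squared_chernoff_exponent_le {a b : ℝ} (ha : 0 < a) (hb : 0 < b) :
    a ^ 2 / 2 * -log (a / (a + 2 * b)) ≤
      b / (a + 2 * b) * (a ^ 2 + 2 * a * b + 2 * b ^ 2) - b ^ 2 := by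
  have hx0 : 0 < a / (a + 2 * b) := by positivity
  have hx1 : a / (a + 2 * b) ≤ 1 := (div_le_one (by positivity)).2 (by linarith)
  have hrhs : a ^ 2 / 2 * -((a / (a + 2 * b) - (a / (a + 2 * b))⁻¹) / 2) =
      b / (a + 2 * b) * (a ^ 2 + 2 * a * b + 2 * b ^ 2) - b ^ 2 := by
    field_simp
    ring
  rw [← hrhs]
  gcongr
  exact sub_inv_div_two_le_log hx0 hx1

section GaussianSquare

variable {v : ℝ≥0} {c : ℝ}

lemma gaussianPDFReal_mul_exp_mul_sq (hv : v ≠ 0) (x : ℝ) :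
    gaussianPDFReal 0 v x * exp (c * x ^ 2) =
      (√(2 * π * v))⁻¹ * exp (-((1 - 2 * c * v) / (2 * v)) * x ^ 2) := by
  have : (v : ℝ) ≠ 0 := by exact_mod_cast hv
  rw [gaussianPDFReal, mul_assoc, ← exp_add]
  congr 2
  field_simp
  ring

lemma integrable_exp_mul_sq_gaussianReal (hv : v ≠ 0) (hc : 2 * c * v < 1) :
    Integrable (fun x ↦ exp (c * x ^ 2)) (gaussianReal 0 v) := by
  have hb : 0 < (1 - 2 * c * v) / (2 * v) := div_pos (by linarith) (by positivity)
  rw [gaussianReal_of_var_ne_zero 0 hv, integrable_withDensity_iff_integrable_smul'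
    (measurable_gaussianPDF 0 v) (ae_of_all _ fun _ ↦ gaussianPDF_lt_top)]
  simp_rw [toReal_gaussianPDF, smul_eq_mul, gaussianPDFReal_mul_exp_mul_sq hv]
  exact (integrable_exp_neg_mul_sq hb).const_mul _

-- For `2 c v ≥ 1` both sides are junk zeros: a non-integrable integrand and `√` of a nonpositive number.
lemma mgf_sq_gaussianReal (hv : v ≠ 0) :
    mgf (fun x ↦ x ^ 2) (gaussianReal 0 v) c = (√(1 - 2 * c * v))⁻¹ := by
  have : (v : ℝ) ≠ 0 := by exact_mod_cast hv
  rw [mgf, integral_gaussianReal_eq_integral_smul hv]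
  simp_rw [smul_eq_mul, gaussianPDFReal_mul_exp_mul_sq hv]
  rw [integral_const_mul, integral_gaussian, ← sqrt_inv, ← sqrt_inv,
    ← sqrt_mul (by positivity)]
  congr 1
  field_simp

end GaussianSquare

section SumOfSquares

variable {Ω ι : Type*} [MeasurableSpace Ω] {μ : Measure Ω} [IsProbabilityMeasure μ] [Fintype ι]
  {g : ι → Ω → ℝ} {v : ℝ≥0} {c : ℝ}

lemma measure_sum_sq_ge_le_exp (hmeas : ∀ i, Measurable (g i)) (hindep : iIndepFun g μ)
    (hdist : ∀ i, μ.map (g i) = gaussianReal 0 v) (hv : v ≠ 0) (hc0 : 0 ≤ c)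
    (hc : 2 * c * v < 1) (ε : ℝ) :
    μ.real {ω | ε ≤ ∑ i, g i ω ^ 2} ≤
      exp (-c * ε - Fintype.card ι * log (1 - 2 * c * v) / 2) := by
  have hsq_meas : ∀ i, Measurable fun ω ↦ g i ω ^ 2 := fun i ↦ (hmeas i).pow_const 2
  have hsq_indep : iIndepFun (fun i ω ↦ g i ω ^ 2) μ :=
    hindep.comp (fun _ x ↦ x ^ 2) fun _ ↦ measurable_id.pow_const 2
  have hint : ∀ i, Integrable (fun ω ↦ exp (c * g i ω ^ 2)) μ := fun i ↦ by
    have hint_law := integrable_exp_mul_sq_gaussianReal hv hc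
    rw [← hdist i] at hint_law
    exact (integrable_map_measure (by fun_prop) (hmeas i).aemeasurable).1 hint_law
  have hcgf : ∀ i, cgf (fun ω ↦ g i ω ^ 2) μ c = -log (1 - 2 * c * v) / 2 := fun i ↦ by
    rw [cgf, ← Function.comp_def (· ^ 2) (g i), ← mgf_map (hmeas i).aemeasurable (by fun_prop),
      hdist i, mgf_sq_gaussianReal hv, log_inv, log_sqrt (by linarith), neg_div]
  have hchernoff := measure_ge_le_exp_cgf (X := ∑ i, fun ω ↦ g i ω ^ 2) ε hc0
    (hsq_indep.integrable_exp_mul_sum hsq_meas fun i _ ↦ hint i)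
  rw [hsq_indep.cgf_sum hsq_meas fun i _ ↦ hint i] at hchernoff
  simp only [Finset.sum_apply, hcgf, Finset.sum_const, Finset.card_univ, nsmul_eq_mul]
    at hchernoff
  convert hchernoff using 2
  ring

end SumOfSquares

theorem chi_squared_upper_tail {Ω : Type*} [MeasureSpace Ω]
    [IsProbabilityMeasure (ℙ : Measure Ω)]
    (k : ℕ) (σ : ℝ) (hσ : 0 < σ) (g : Fin k → Ω → ℝ)
    (hmeas : ∀ i, Measurable (g i))
    (hindep : iIndepFun g ℙ)
    (hdist : ∀ i, Measure.map (g i) ℙ = gaussianReal 0 ⟨σ ^ 2, sq_nonneg σ⟩)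
    (t : ℝ) (ht : 0 < t) :
    ℙ {ω | (2 * Real.sqrt (k * t) + 2 * t) * σ ^ 2 ≤ (∑ i, (g i ω) ^ 2) - k * σ ^ 2} ≤
      ENNReal.ofReal (Real.exp (-t)) := by
  rcases k.eq_zero_or_pos with rfl | hk
  · have h : 0 < 2 * t * σ ^ 2 := by positivity
    simp [h.not_ge]
  have hv_coe : NNReal.toReal ⟨σ ^ 2, sq_nonneg σ⟩ = σ ^ 2 := rfl
  have hv : (⟨σ ^ 2, sq_nonneg σ⟩ : ℝ≥0) ≠ 0 :=
    fun h ↦ (pow_pos hσ 2).ne' (congrArg NNReal.toReal h)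
  have ha : 0 < √(k : ℝ) := sqrt_pos.2 (by exact_mod_cast hk)
  have hb : 0 < √t := sqrt_pos.2 ht
  have hexponent := chi_squared_chernoff_exponent_le ha hb
  rw [sq_sqrt (Nat.cast_nonneg k), sq_sqrt ht.le] at hexponent
  set c := √t / ((√k + 2 * √t) * σ ^ 2) with hc
  have hq : 1 - 2 * c * σ ^ 2 = √k / (√k + 2 * √t) := by
    rw [hc]
    field_simp
    ring
  have hq_pos : 0 < 1 - 2 * c * σ ^ 2 := hq ▸ by positivity
  have hcε : c * ((2 * √(k * t) + 2 * t) * σ ^ 2 + k * σ ^ 2) =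
      √t / (√k + 2 * √t) * (k + 2 * √k * √t + 2 * t) := by
    rw [hc, sqrt_mul (Nat.cast_nonneg k)]
    field_simp
    ring
  have hbound := measure_sum_sq_ge_le_exp hmeas hindep hdist hv (c := c) (by positivity)
    (by rw [hv_coe]; linarith) ((2 * √(k * t) + 2 * t) * σ ^ 2 + k * σ ^ 2)
  simp_rw [le_sub_iff_add_le]
  refine (ENNReal.le_ofReal_iff_toReal_le (measure_ne_top _ _) (exp_pos _).le).2
    (hbound.trans (exp_le_exp.2 ?_))
  rw [Fintype.card_fin, hv_coe, hq, neg_mul, hcε]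
  linarith
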